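/- arXiv:math/9205205 — 2 statements merged into one kernel-verified Lean document; each statement's English description precedes it below -/
import Mathlib

section
/- Let $1 < p < 2$, let $(a_i)_{i\ge 1}$ be a real sequence, and let $0 = n_0 < n_1 < n_2 < \cdots$ be an increasing sequence of integers such that for every $k \ge 0$: (1) $\|(a_{n_k+1}, \dots, a_{n_{k+1}})\|_{p,\infty} \le 1$, and (2) $|a_i| \le n_k^{-1/p}$ for all $n_k < i \le n_{k+1}$ (for $k \ge 1$). Then $\|(a_1, a_2, \dots)\|_{p,\infty} \le 2$. -/
open Finset in
/-- The weak-`ℓᵖ` (Lorentz `ℓ^{p,∞}`) quasi-norm of a finite real tuple: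
`max_n a*_n n^(1/p)` where `(a*_n)` is the decreasing rearrangement of `(|a_n|)`. -/
noncomputable def wnorm (p : ℝ) {m : ℕ} (a : Fin m → ℝ) : ℝ :=
  ⨆ n : Fin m, |a (Tuple.sort (fun i => -|a i|) n)| * ((n : ℝ) + 1) ^ ((1 : ℝ) / p)

open Finset in
lemma block_count (p t : ℝ) (hp : 0 < p) (ht : 0 < t) {m : ℕ} (b : Fin m → ℝ)
    (h : wnorm p b ≤ 1) :
    ((univ.filter (fun j : Fin m => t < |b j|)).card : ℝ) ≤ t ^ (-p) := by
  set σ := Tuple.sort (fun i => -|b i|) with hσ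
  have hanti : Antitone (fun j => |b (σ j)|) := by
    intro j j' hle
    have := Tuple.monotone_sort (fun i => -|b i|) hle
    simpa using this
  have hcard : (univ.filter (fun j : Fin m => t < |b j|)).card
      = (univ.filter (fun j : Fin m => t < |b (σ j)|)).card := by
    apply Finset.card_bij (fun j _ => σ.symm j)
    · intro j hj; simp at hj ⊢; simpa using hj
    · intro j _ j' _ hjj'; exact σ.symm.injective hjj'
    · intro j hj; simp at hj
      exact ⟨σ j, by simpa using hj, by simp⟩
  rw [hcard]
  set S := univ.filter (fun j : Fin m => t < |b (σ j)|) with hS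
  rcases S.eq_empty_or_nonempty with he | hne
  · rw [he]; simp; positivity
  · set j0 := S.max' hne with hj0
    have hj0S : j0 ∈ S := S.max'_mem hne
    have hsub : S ⊆ Finset.Iic j0 := fun j hj => Finset.mem_Iic.mpr (S.le_max' j hj)
    have hsub2 : Finset.Iic j0 ⊆ S := by
      intro j hj
      simp only [hS, mem_filter, mem_univ, true_and] at hj0S ⊢
      exact lt_of_lt_of_le hj0S (hanti (Finset.mem_Iic.mp hj))
    have hcard2 : S.card = (j0 : ℕ) + 1 := by
      rw [Finset.Subset.antisymm hsub hsub2, Fin.card_Iic]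
    have h' : (⨆ j : Fin m, |b (σ j)| * ((j : ℝ) + 1) ^ ((1:ℝ)/p)) ≤ 1 := h
    have hle : |b (σ j0)| * ((j0 : ℝ) + 1) ^ ((1:ℝ)/p) ≤ 1 := by
      refine le_trans ?_ h'
      exact le_ciSup (f := fun j : Fin m => |b (σ j)| * ((j : ℝ) + 1) ^ ((1:ℝ)/p)) (Set.Finite.bddAbove (Set.finite_range _)) j0
    have htlt : t < |b (σ j0)| := by
      simpa [hS] using hj0S
    have h1 : t * ((j0 : ℝ) + 1) ^ ((1:ℝ)/p) ≤ 1 := by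
      refine le_trans (mul_le_mul_of_nonneg_right htlt.le (by positivity)) hle
    have h2 : ((j0 : ℝ) + 1) ^ ((1:ℝ)/p) ≤ t ^ (-(1:ℝ)) := by
      rw [Real.rpow_neg_one, ← one_div, le_div_iff₀ ht]
      linarith [h1]
    have h3 : (((j0 : ℝ) + 1) ^ ((1:ℝ)/p)) ^ p ≤ (t ^ (-(1:ℝ))) ^ p := by
      exact Real.rpow_le_rpow (by positivity) h2 hp.le
    rw [← Real.rpow_mul ht.le] at h3
    rw [← Real.rpow_mul (by positivity), one_div_mul_cancel hp.ne', Real.rpow_one] at h3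
    rw [hcard2]
    push_cast
    calc ((j0:ℝ)+1) ≤ t ^ ((-(1:ℝ))*p) := h3
    _ = t ^ (-p) := by rw [neg_one_mul]

open Finset in
lemma block_count_nat (p t : ℝ) (hp : 0 < p) (ht : 0 < t) (a : ℕ → ℝ) (n : ℕ → ℕ)
    (k : ℕ) (hw : wnorm p (fun i : Fin (n (k + 1) - n k) => a (n k + 1 + (i : ℕ))) ≤ 1) :
    (((Ioc (n k) (n (k+1))).filter (fun i => t < |a i|)).card : ℝ) ≤ t ^ (-p) := by
  set m := n (k+1) - n k with hm
  have hcard : ((Ioc (n k) (n (k+1))).filter (fun i => t < |a i|)).card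
      = (univ.filter (fun j : Fin m => t < |a (n k + 1 + (j : ℕ))|)).card := by
    refine Finset.card_bij' (fun i hi => (⟨i - (n k + 1), by
        simp only [Finset.mem_filter, Finset.mem_Ioc] at hi; omega⟩ : Fin m))
      (fun j _ => n k + 1 + (j : ℕ)) ?_ ?_ ?_ ?_
    · intro i hi
      simp only [mem_filter, mem_Ioc] at hi ⊢
      refine ⟨mem_univ _, ?_⟩
      have : n k + 1 + (i - (n k + 1)) = i := by omega
      rw [this]; exact hi.2
    · intro j hj
      simp only [mem_filter, mem_Ioc] at hj ⊢
      have := j.isLt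
      refine ⟨⟨by omega, by omega⟩, hj.2⟩
    · intro i hi
      simp only [mem_filter, mem_Ioc] at hi
      dsimp only
      omega
    · intro j hj
      apply Fin.ext
      dsimp only
      have := j.isLt
      omega
  rw [hcard]
  exact block_count p t hp ht _ hw

/-- If a real sequence `(a_i)_{i ≥ 1}` is broken into consecutive blocks
`(a_{n_k+1}, …, a_{n_{k+1}})` along `0 = n₀ < n₁ < ⋯` with each block of
`ℓ^{p,∞}`-norm at most `1` and, for `k ≥ 1`, all entries of the `k`-th block at most
`n_k^{-1/p}` in modulus, then `‖(a_1, a_2, …)‖_{p,∞} ≤ 2`, i.e. every level set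
`{i ≥ 1 : |a_i| > t}` is finite of cardinality ≤ `(2/t)^p`. -/
theorem wnorm_le_two_of_blocks (p : ℝ) (hp1 : 1 < p) (hp2 : p < 2)
    (a : ℕ → ℝ) (n : ℕ → ℕ) (hn0 : n 0 = 0) (hmono : StrictMono n)
    (hblock : ∀ k : ℕ,
      wnorm p (fun i : Fin (n (k + 1) - n k) => a (n k + 1 + (i : ℕ))) ≤ 1)
    (hsmall : ∀ k : ℕ, 1 ≤ k → ∀ i : ℕ, n k < i → i ≤ n (k + 1) →
      |a i| ≤ (n k : ℝ) ^ (-(1 / p))) :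
    ∀ t : ℝ, 0 < t →
      {i : ℕ | 1 ≤ i ∧ t < |a i|}.Finite ∧
      (Nat.card {i : ℕ | 1 ≤ i ∧ t < |a i|} : ℝ) ≤ (2 / t) ^ p := by
  intro t ht
  have hp : 0 < p := by linarith
  have htp : (0:ℝ) < t ^ (-p) := Real.rpow_pos_of_pos ht _
  have hex : ∃ k, 1 ≤ k ∧ t ^ (-p) ≤ (n k : ℝ) := by
    refine ⟨max 1 ⌈t ^ (-p)⌉₊, le_max_left _ _, ?_⟩
    calc t ^ (-p) ≤ (⌈t ^ (-p)⌉₊ : ℝ) := Nat.le_ceil _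
      _ ≤ ((max 1 ⌈t ^ (-p)⌉₊ : ℕ) : ℝ) := by exact_mod_cast le_max_right _ _
      _ ≤ (n (max 1 ⌈t ^ (-p)⌉₊) : ℝ) := Nat.cast_le.mpr hmono.le_apply
  set K := Nat.find hex with hKdef
  obtain ⟨hK1, hK2⟩ : 1 ≤ K ∧ t ^ (-p) ≤ (n K : ℝ) := Nat.find_spec hex
  have hprev : (n (K - 1) : ℝ) ≤ t ^ (-p) := by
    rcases eq_or_lt_of_le hK1 with h | h
    · rw [show K - 1 = 0 by omega, hn0]; exact_mod_cast htp.le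
    · have hmin : ¬(1 ≤ K - 1 ∧ t ^ (-p) ≤ (n (K - 1) : ℝ)) :=
        Nat.find_min hex (by omega)
      push_neg at hmin
      exact (hmin (by omega)).le
  have hnK1 : 1 ≤ n K := by
    by_contra h
    push_neg at h
    have h0 : n K = 0 := by omega
    rw [h0] at hK2
    simp at hK2
    linarith
  have htail : ∀ i, n K < i → |a i| ≤ t := by
    intro i hi
    have hex2 : ∃ m, i ≤ n m := ⟨i, hmono.le_apply⟩
    set M := Nat.find hex2 with hMdef
    have hM : i ≤ n M := Nat.find_spec hex2
    have hM0 : M ≠ 0 := by intro h; rw [h, hn0] at hM; omega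
    have hMK : K < M := by
      by_contra h
      push_neg at h
      have := hmono.monotone h
      omega
    have hkm : n (M - 1) < i := by
      have := Nat.find_min hex2 (m := M - 1) (by omega)
      omega
    have hk1 : 1 ≤ M - 1 := by omega
    have hkK : K ≤ M - 1 := by omega
    have hs := hsmall (M - 1) hk1 i hkm (by rw [show M - 1 + 1 = M by omega]; exact hM)
    refine hs.trans ?_
    have hexp : -(1 / p) ≤ 0 := by rw [neg_nonpos]; positivity
    have h1 : ((n K : ℝ)) ^ (-(1 / p)) ≤ t := by
      calc ((n K : ℝ)) ^ (-(1 / p)) ≤ (t ^ (-p)) ^ (-(1 / p)) :=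
            Real.rpow_le_rpow_of_nonpos htp hK2 hexp
        _ = t := by
            rw [← Real.rpow_mul ht.le]
            rw [show -p * -(1 / p) = 1 by field_simp, Real.rpow_one]
    have h2 : ((n (M - 1) : ℝ)) ^ (-(1 / p)) ≤ ((n K : ℝ)) ^ (-(1 / p)) := by
      apply Real.rpow_le_rpow_of_nonpos (by exact_mod_cast hnK1)
        (Nat.cast_le.mpr (hmono.monotone hkK)) hexp
    linarith
  have hseteq : {i : ℕ | 1 ≤ i ∧ t < |a i|}
      = ↑((Finset.Icc 1 (n K)).filter (fun i => t < |a i|)) := by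
    ext i
    simp only [Set.mem_setOf_eq, Finset.coe_filter, Finset.mem_Icc]
    constructor
    · rintro ⟨h1, h2⟩
      refine ⟨⟨h1, ?_⟩, h2⟩
      by_contra h
      push_neg at h
      exact absurd h2 (not_lt.mpr (htail i h))
    · rintro ⟨⟨h1, _⟩, h2⟩
      exact ⟨h1, h2⟩
  refine ⟨by rw [hseteq]; exact Finset.finite_toSet _, ?_⟩
  rw [hseteq, Nat.card_coe_set_eq, Set.ncard_coe_finset]
  have hsub : (Finset.Icc 1 (n K)).filter (fun i => t < |a i|)
      ⊆ Finset.Icc 1 (n (K - 1)) ∪ (Finset.Ioc (n (K - 1)) (n K)).filter (fun i => t < |a i|) := by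
    intro i hi
    simp only [Finset.mem_filter, Finset.mem_Icc, Finset.mem_union, Finset.mem_Ioc] at hi ⊢
    rcases le_or_gt i (n (K - 1)) with h | h
    · exact Or.inl ⟨hi.1.1, h⟩
    · exact Or.inr ⟨⟨h, hi.1.2⟩, hi.2⟩
  have hcardle := Finset.card_le_card hsub
  have hcardu := Finset.card_union_le (Finset.Icc 1 (n (K - 1)))
    ((Finset.Ioc (n (K - 1)) (n K)).filter (fun i => t < |a i|))
  have hblockK : (((Finset.Ioc (n (K - 1)) (n K)).filter (fun i => t < |a i|)).card : ℝ)
      ≤ t ^ (-p) := by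
    have := block_count_nat p t hp ht a n (K - 1) (hblock (K - 1))
    rwa [show K - 1 + 1 = K by omega] at this
  have hIcc : (Finset.Icc 1 (n (K - 1))).card = n (K - 1) := by
    rw [Nat.card_Icc]; omega
  have hfinal : (((Finset.Icc 1 (n K)).filter (fun i => t < |a i|)).card : ℝ)
      ≤ 2 * t ^ (-p) := by
    have h1 : (((Finset.Icc 1 (n K)).filter (fun i => t < |a i|)).card : ℝ)
        ≤ (Finset.Icc 1 (n (K - 1))).card
          + (((Finset.Ioc (n (K - 1)) (n K)).filter (fun i => t < |a i|)).card : ℝ) := by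
      exact_mod_cast le_trans (Nat.cast_le.mpr hcardle) (by exact_mod_cast hcardu)
    rw [hIcc] at h1
    linarith
  refine hfinal.trans ?_
  have h2p : (2:ℝ) ≤ 2 ^ p := by
    calc (2:ℝ) = 2 ^ (1:ℝ) := (Real.rpow_one 2).symm
      _ ≤ 2 ^ p := Real.rpow_le_rpow_of_exponent_le one_le_two hp1.le
  have hdiv : ((2:ℝ) / t) ^ p = 2 ^ p * t ^ (-p) := by
    rw [Real.div_rpow (by norm_num) ht.le, Real.rpow_neg ht.le, div_eq_mul_inv]
  rw [hdiv]
  nlinarith [htp]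
end

section
/- Let $a = (a_{i,j})_{1 \le i \le k, 1 \le j \le l}$ be a matrix with entries in $[0,1]$ such that $\sum_{i,j} a_{i,j} \le M$. Then there is a partition $R_1, \dots, R_n$ of the index rectangle $R = \{(i,j) : 1 \le i \le k, 1 \le j \le l\}$ such that: (1) $n \le 2M + k$; (2) $\sum_{(i,j) \in R_m} a_{i,j} \le 1$ for every $1 \le m \le n$; and (3) for every $m$ and every column index $j$, the set $R_m$ contains at most one pair of the form $(i,j)$ (i.e., each part meets each column in at most one entry). -/
open Finset

/-- Greedy bucketing state: `(st A j).1` = current bucket index after processing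
columns `< j`, `(st A j).2` = sum of entries in the current bucket. -/
noncomputable def st (A : ℕ → ℝ) (j : ℕ) : ℕ × ℝ :=
  Nat.rec (0, 0)
    (fun j p => if p.2 + A j ≤ 1 then (p.1, p.2 + A j) else (p.1 + 1, A j)) j

lemma st_zero (A : ℕ → ℝ) : st A 0 = (0, 0) := rfl

lemma st_succ (A : ℕ → ℝ) (j : ℕ) :
    st A (j+1) = if (st A j).2 + A j ≤ 1 then ((st A j).1, (st A j).2 + A j)
           else ((st A j).1 + 1, A j) := rfl

lemma st_s_mem (A : ℕ → ℝ) (hA : ∀ j, 0 ≤ A j ∧ A j ≤ 1) (j : ℕ) :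
    0 ≤ (st A j).2 ∧ (st A j).2 ≤ 1 := by
  induction j with
  | zero => simp [st_zero]
  | succ j ih =>
    rw [st_succ]
    rcases le_or_gt ((st A j).2 + A j) 1 with h | h
    · rw [if_pos h]
      exact ⟨by have := (hA j).1; simp only; linarith [ih.1], by simpa using h⟩
    · rw [if_neg (not_le.mpr h)]
      simpa using hA j

lemma st_b_mono (A : ℕ → ℝ) : Monotone fun j => (st A j).1 := by
  apply monotone_nat_of_le_succ
  intro j
  rw [st_succ]
  split <;> simp

lemma st_bound (A : ℕ → ℝ) (hA : ∀ j, 0 ≤ A j ∧ A j ≤ 1) (j : ℕ) :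
    ((st A j).1 : ℝ) + (st A j).2 ≤ 2 * ∑ x ∈ range j, A x := by
  induction j with
  | zero => simp [st_zero]
  | succ j ih =>
    rw [st_succ, Finset.sum_range_succ]
    rcases le_or_gt ((st A j).2 + A j) 1 with h | h
    · rw [if_pos h]
      have := (hA j).1
      simp only
      linarith
    · rw [if_neg (not_le.mpr h)]
      have := st_s_mem A hA j
      simp only
      push_cast
      linarith

/-- Bucket of column `x` is the bucket index right after processing it. -/
noncomputable def bucket (A : ℕ → ℝ) (x : ℕ) : ℕ := (st A (x+1)).1

lemma st_filter (A : ℕ → ℝ) (hA : ∀ j, 0 ≤ A j ∧ A j ≤ 1) (j : ℕ) :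
    (∑ x ∈ (range j).filter (fun x => bucket A x = (st A j).1), A x = (st A j).2)
    ∧ (∀ t, t ≠ (st A j).1 →
        ∑ x ∈ (range j).filter (fun x => bucket A x = t), A x ≤ 1)
    ∧ (∀ t, (st A j).1 < t →
        ∑ x ∈ (range j).filter (fun x => bucket A x = t), A x = 0) := by
  induction j with
  | zero =>
    simp [st_zero]
    rfl
  | succ j ih =>
    obtain ⟨ih1, ih2, ih3⟩ := ih
    have key : ∀ t, ∑ x ∈ (range (j+1)).filter (fun x => bucket A x = t), A x
        = (∑ x ∈ (range j).filter (fun x => bucket A x = t), A x)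
          + (if bucket A j = t then A j else 0) := by
      intro t
      rw [Finset.range_add_one, Finset.filter_insert]
      by_cases h : bucket A j = t
      · rw [if_pos h, if_pos h, Finset.sum_insert (by simp)]; ring
      · rw [if_neg h, if_neg h]; ring
    rcases le_or_gt ((st A j).2 + A j) 1 with h | h
    · have e1 : st A (j+1) = ((st A j).1, (st A j).2 + A j) := by
        rw [st_succ, if_pos h]
      have hb : bucket A j = (st A j).1 := by rw [bucket, e1]
      rw [e1]
      refine ⟨?_, ?_, ?_⟩
      · rw [key, if_pos hb, ih1]
      · intro t ht
        simp only at ht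
        rw [key, if_neg (by rw [hb]; exact fun hc => ht hc.symm)]
        simpa using ih2 t ht
      · intro t ht
        simp only at ht
        rw [key, if_neg (by rw [hb]; omega)]
        simpa using ih3 t ht
    · have e1 : st A (j+1) = ((st A j).1 + 1, A j) := by
        rw [st_succ, if_neg (not_le.mpr h)]
      have hb : bucket A j = (st A j).1 + 1 := by rw [bucket, e1]
      rw [e1]
      refine ⟨?_, ?_, ?_⟩
      · simp only
        rw [key, if_pos hb, ih3 _ (by omega)]
        ring
      · intro t ht
        simp only at ht
        rw [key, if_neg (by omega)]
        rcases eq_or_ne t (st A j).1 with rfl | ht'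
        · rw [ih1]
          simpa using (st_s_mem A hA j).2
        · simpa using ih2 t ht'
      · intro t ht
        simp only at ht
        rw [key, if_neg (by omega)]
        simpa using ih3 t (by omega)

lemma bucket_sum_le (A : ℕ → ℝ) (hA : ∀ j, 0 ≤ A j ∧ A j ≤ 1) (j t : ℕ) :
    ∑ x ∈ (range j).filter (fun x => bucket A x = t), A x ≤ 1 := by
  obtain ⟨h1, h2, _⟩ := st_filter A hA j
  rcases eq_or_ne t (st A j).1 with rfl | ht
  · rw [h1]; exact (st_s_mem A hA j).2
  · exact h2 t ht
open Finset in
/-- Given a `[0,1]`-valued `k × l` matrix with total sum at most `M`, the index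
rectangle can be partitioned into `n ≤ 2M + k` parts, each of total mass at most
`1` and meeting each column in at most one entry. -/
theorem matrix_partition (k l : ℕ) (hk : 0 < k) (hl : 0 < l) (M : ℝ) (hM : 0 < M)
    (a : Fin k → Fin l → ℝ) (ha : ∀ i j, a i j ∈ Set.Icc (0 : ℝ) 1)
    (hsum : ∑ i, ∑ j, a i j ≤ M) :
    ∃ (n : ℕ) (R : Fin n → Finset (Fin k × Fin l)),
      (∀ m m', m ≠ m' → Disjoint (R m) (R m')) ∧
      (Finset.univ.biUnion R = Finset.univ) ∧
      (n : ℝ) ≤ 2 * M + k ∧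
      (∀ m, ∑ q ∈ R m, a q.1 q.2 ≤ 1) ∧
      (∀ m, ∀ j : Fin l, ((R m).filter (fun q => q.2 = j)).card ≤ 1) := by
  classical
  set A : Fin k → ℕ → ℝ := fun i j => if h : j < l then a i ⟨j, h⟩ else 0 with hAdef
  have hA : ∀ i, ∀ j, 0 ≤ A i j ∧ A i j ≤ 1 := by
    intro i j
    simp only [hAdef]
    split
    · exact ⟨(ha i _).1, (ha i _).2⟩
    · exact ⟨le_refl 0, zero_le_one⟩
  set nrow : Fin k → ℕ := fun i => (st (A i) l).1 + 1 with hnrow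
  set n := Fintype.card (Σ i : Fin k, Fin (nrow i)) with hn
  set e : (Σ i : Fin k, Fin (nrow i)) ≃ Fin n := Fintype.equivFin _ with he
  have hbk_lt : ∀ q : Fin k × Fin l, bucket (A q.1) q.2 < nrow q.1 := by
    intro q
    have : (st (A q.1) (q.2.val+1)).1 ≤ (st (A q.1) l).1 :=
      st_b_mono (A q.1) (by omega : q.2.val + 1 ≤ l)
    simp only [hnrow, bucket] at *
    omega
  set idx : Fin k × Fin l → Fin n :=
    fun q => e ⟨q.1, ⟨bucket (A q.1) q.2, hbk_lt q⟩⟩ with hidx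
  refine ⟨n, fun m => univ.filter (fun q => idx q = m), ?_, ?_, ?_, ?_, ?_⟩
  · intro m m' hmm
    simp only [Finset.disjoint_left, Finset.mem_filter]
    rintro q ⟨-, h1⟩ ⟨-, h2⟩
    exact hmm (h1 ▸ h2)
  · apply Finset.eq_univ_of_forall
    intro q
    exact Finset.mem_biUnion.mpr ⟨idx q, Finset.mem_univ _, by simp⟩
  · have hcard : n = ∑ i, nrow i := by
      rw [hn, Fintype.card_sigma]
      simp
    rw [hcard, Nat.cast_sum]
    have hrow : ∀ i, (nrow i : ℝ) ≤ 2 * ∑ j, a i j + 1 := by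
      intro i
      have hb := st_bound (A i) (hA i) l
      have hs := (st_s_mem (A i) (hA i) l).1
      have hsum_eq : ∑ x ∈ range l, A i x = ∑ j, a i j := by
        rw [← Fin.sum_univ_eq_sum_range]
        apply Finset.sum_congr rfl
        intro j _
        simp [hAdef, j.isLt]
      rw [hsum_eq] at hb
      simp only [hnrow]
      push_cast
      linarith
    calc ∑ i, (nrow i : ℝ) ≤ ∑ i, (2 * ∑ j, a i j + 1) := Finset.sum_le_sum fun i _ => hrow i
      _ = 2 * (∑ i, ∑ j, a i j) + k := by rw [Finset.sum_add_distrib, Finset.mul_sum]; simp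
      _ ≤ 2 * M + k := by linarith
  · intro m
    obtain ⟨⟨i, t⟩, hsig⟩ : ∃ p : Σ i : Fin k, Fin (nrow i), e.symm m = p := ⟨_, rfl⟩
    have hqk : ∀ q : Fin k × Fin l, idx q = m →
        q.1 = i ∧ bucket (A q.1) q.2.val = t.val := by
      intro q hqm
      have h0 : (⟨q.1, ⟨bucket (A q.1) q.2, hbk_lt q⟩⟩ : Σ i : Fin k, Fin (nrow i))
          = ⟨i, t⟩ := by
        rw [← hsig, ← hqm, Equiv.symm_apply_apply]
      have h1 := congrArg (fun p : (Σ i : Fin k, Fin (nrow i)) => (p.1.val, p.2.val)) h0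
      simp only [Prod.mk.injEq] at h1
      exact ⟨Fin.ext h1.1, h1.2⟩
    have hsub : univ.filter (fun q : Fin k × Fin l => idx q = m) ⊆
        (univ.filter (fun j : Fin l => bucket (A i) j.val = t.val)).image
          (fun j => (i, j)) := by
      intro q hq'
      simp only [Finset.mem_filter, Finset.mem_univ, true_and] at hq'
      obtain ⟨h1, h2⟩ := hqk q hq'
      refine Finset.mem_image.mpr ⟨q.2, ?_, ?_⟩
      · simp only [Finset.mem_filter, Finset.mem_univ, true_and]
        have hAi : A q.1 = A i := congrArg A h1
        rw [← hAi]; exact h2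
      · exact Prod.ext h1.symm rfl
    refine le_trans (Finset.sum_le_sum_of_subset_of_nonneg hsub
      (fun q _ _ => (ha q.1 q.2).1)) ?_
    rw [Finset.sum_image (by intro x _ y _ h; simpa using h)]
    have heq : ∑ j ∈ univ.filter (fun j : Fin l => bucket (A i) j.val = t.val), a i j
        = ∑ x ∈ (range l).filter (fun x => bucket (A i) x = t.val), A i x := by
      rw [Finset.sum_filter, Finset.sum_filter,
        ← Fin.sum_univ_eq_sum_range (fun x => if bucket (A i) x = t.val then A i x else 0) l]
      apply Finset.sum_congr rfl
      intro j _
      simp [hAdef, j.isLt]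
    rw [heq]
    exact bucket_sum_le _ (hA i) _ _
  · intro m j
    apply Finset.card_le_one.mpr
    intro q hq q' hq'
    simp only [Finset.mem_filter, Finset.mem_univ, true_and] at hq hq'
    have hfst : q.1 = q'.1 := by
      have h0 := e.injective (hq.1.trans hq'.1.symm)
      exact congrArg Sigma.fst h0
    exact Prod.ext hfst (hq.2.trans hq'.2.symm)
end
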